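/- Let m ≥ 2 and x ∈ ℝ. For an integer k ≥ 0, let s[k] = (Σ_{j=0}^{k−1} L^j) 𝟏 ∈ ℝ^m with coordinates s₁[k],…,s_m[k] (so that s₁[k] = k). Then for every integer k ≥ 1, ∫_{[0,1)^m} ⟨v_m⟩₀ · ⟨ v_m + Σ_{j=1}^{m−1} s_j[k] v_j + x s_m[k] ⟩₀ dv₁…dv_m = 0, while for k = 0 the same integral equals 1/12. Consequently, for the ideal m-th order Σ∆ schemes whose tile function is G_Γ(v) = ⟨v_m⟩₀, the autocorrelation sequence is ρ_u[k] = (1/12)·δ_{k,0} and the power spectral measure is (1/12) times Lebesgue measure on 𝕋. -/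

import Mathlib

open MeasureTheory Real

noncomputable section

/-- The d×d lower-triangular matrix of ones: `L i j = 1` iff `j ≤ i`. -/
def Lmat (d : ℕ) : Matrix (Fin d) (Fin d) ℝ :=
  fun i j => if j ≤ i then 1 else 0

/-- `s[k] = (∑_{j=0}^{k-1} L^j) 𝟏 ∈ ℝ^m`. -/
def svec (d k : ℕ) : Fin d → ℝ :=
  (∑ j ∈ Finset.range k, (Lmat d) ^ j).mulVec (fun _ => 1)

/-- `⟨α⟩₀`: the unique element of `[−1/2, 1/2)` congruent to `α` mod `ℤ`. -/
def frac0 (α : ℝ) : ℝ := α - round α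

/-- The unit cube `[0,1)^d ⊆ ℝ^d`. -/
def unitCube (d : ℕ) : Set (Fin d → ℝ) := Set.univ.pi fun _ => Set.Ico 0 1

/-! In both integrals the second factor has the form `⟨b ⬝ᵥ v + c⟩₀` where the coefficient
`b 0` is a nonzero integer: `s₁[k] = k` in the first, the entry `(L^k)_{m,1} ≥ 1` in the second.
Since `m ≥ 2`, the first factor `⟨v_m⟩₀` does not involve `v 0`. Integrating first in `v 0`,
the map `t ↦ ⟨b 0 * t + c'⟩₀` on `[0, 1)` runs `|b 0|` times through a period of the mean-zero
function `⟨·⟩₀`, so the integral vanishes. For `k = 0` we have `L^0 = 1` and `s[0] = 0`, and the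
integral is `∫_{-1/2}^{1/2} t² dt = 1/12`. -/

lemma frac0_eq_fract (x : ℝ) : frac0 x = Int.fract (x + 1 / 2) - 1 / 2 := by
  rw [frac0, round_eq, Int.fract]
  ring

lemma measurable_frac0 : Measurable frac0 := by
  rw [funext frac0_eq_fract]
  fun_prop

lemma abs_frac0_le (x : ℝ) : |frac0 x| ≤ 1 / 2 := abs_sub_round x

lemma periodic_frac0 : Function.Periodic frac0 1 := by
  intro x
  simp only [frac0_eq_fract, add_right_comm x 1, Int.fract_add_one]

lemma frac0_eq_self {x : ℝ} (hx : x ∈ Set.Ico (-(1 / 2)) (1 / 2)) : frac0 x = x := by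
  rw [frac0_eq_fract, Int.fract_eq_self.2 ⟨by linarith [hx.1], by linarith [hx.2]⟩]
  ring

lemma intervalIntegrable_frac0 (a b : ℝ) : IntervalIntegrable frac0 volume a b :=
  intervalIntegrable_const.mono_fun' measurable_frac0.aestronglyMeasurable
    (ae_of_all _ fun x => (Real.norm_eq_abs _).trans_le (abs_frac0_le x))

lemma intervalIntegral_comp_frac0 (g : ℝ → ℝ) :
    ∫ x in (0 : ℝ)..1, g (frac0 x) = ∫ x in -(1 / 2)..1 / 2, g x := by
  have hshift := (periodic_frac0.comp g).intervalIntegral_add_eq 0 (-(1 / 2))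
  norm_num only [Function.comp_def] at hshift
  rw [hshift, intervalIntegral.integral_of_le (by norm_num),
    intervalIntegral.integral_of_le (by norm_num), ← integral_Ico_eq_integral_Ioc,
    ← integral_Ico_eq_integral_Ioc]
  exact setIntegral_congr_fun measurableSet_Ico fun x hx => by rw [frac0_eq_self hx]

lemma intervalIntegral_frac0 : ∫ x in (0 : ℝ)..1, frac0 x = 0 := by
  simpa [integral_id] using intervalIntegral_comp_frac0 id

lemma intervalIntegral_frac0_sq : ∫ x in (0 : ℝ)..1, frac0 x ^ 2 = 1 / 12 := by
  rw [intervalIntegral_comp_frac0 (· ^ 2)]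
  norm_num [integral_pow]

lemma intervalIntegral_frac0_intCast_mul_add {m : ℤ} (hm : m ≠ 0) (c : ℝ) :
    ∫ t in (0 : ℝ)..1, frac0 (m * t + c) = 0 := by
  rw [intervalIntegral.integral_comp_mul_add frac0 (Int.cast_ne_zero.2 hm), mul_zero, zero_add,
    mul_one, add_comm, ← zsmul_one, periodic_frac0.intervalIntegral_add_zsmul_eq m c
    intervalIntegrable_frac0, periodic_frac0.intervalIntegral_add_eq c 0, zero_add,
    intervalIntegral_frac0, smul_zero, smul_zero]

lemma volume_restrict_unitCube (d : ℕ) :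
    volume.restrict (unitCube d) = Measure.pi fun _ => volume.restrict (Set.Ico (0 : ℝ) 1) := by
  rw [unitCube, volume_pi]
  exact Measure.restrict_pi_pi _ _

lemma integral_unitCube_eq_integral_insertNth {n : ℕ} (i : Fin (n + 1))
    {f : (Fin (n + 1) → ℝ) → ℝ} (hf : IntegrableOn f (unitCube (n + 1))) :
    ∫ v in unitCube (n + 1), f v = ∫ w in unitCube n, ∫ t in (0 : ℝ)..1, f (i.insertNth t w) := by
  let e := MeasurableEquiv.piFinSuccAbove (fun _ : Fin (n + 1) => ℝ) i
  have he := (measurePreserving_piFinSuccAbove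
    (fun _ : Fin (n + 1) => volume.restrict (Set.Ico (0 : ℝ) 1)) i).symm e
  rw [IntegrableOn, volume_restrict_unitCube] at hf
  rw [volume_restrict_unitCube, volume_restrict_unitCube, ← he.integral_comp']
  refine (integral_prod_symm (f ∘ e.symm)
    ((he.integrable_comp_emb e.symm.measurableEmbedding).2 hf)).trans ?_
  refine integral_congr_ae (ae_of_all _ fun w => ?_)
  dsimp only
  rw [intervalIntegral.integral_of_le zero_le_one, ← integral_Ico_eq_integral_Ioc]
  rfl

lemma volume_unitCube (d : ℕ) : volume (unitCube d) = 1 := by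
  simp [unitCube, volume_pi_pi]

lemma integrableOn_unitCube_frac0_mul_frac0 {d : ℕ} {f g : (Fin d → ℝ) → ℝ}
    (hf : Measurable f) (hg : Measurable g) :
    IntegrableOn (fun v => frac0 (f v) * frac0 (g v)) (unitCube d) := by
  refine IntegrableOn.of_bound (by simp [volume_unitCube])
    ((measurable_frac0.comp hf).mul (measurable_frac0.comp hg)).aestronglyMeasurable (1 / 4)
    (ae_of_all _ fun v => ?_)
  rw [Real.norm_eq_abs, abs_mul]
  nlinarith [abs_frac0_le (f v), abs_frac0_le (g v), abs_nonneg (frac0 (f v))]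

lemma integral_unitCube_frac0_sq {n : ℕ} (j : Fin (n + 1)) :
    ∫ v in unitCube (n + 1), frac0 (v j) ^ 2 = 1 / 12 := by
  have hint := integrableOn_unitCube_frac0_mul_frac0 (measurable_pi_apply j) (measurable_pi_apply j)
  simp only [← sq] at hint
  simp [integral_unitCube_eq_integral_insertNth j hint, intervalIntegral_frac0_sq,
    measureReal_def, volume_unitCube]

lemma integral_unitCube_frac0_mul_frac0_dotProduct {n : ℕ} {i j : Fin (n + 1)} (hij : i ≠ j)
    {b : Fin (n + 1) → ℝ} {m : ℤ} (hm : m ≠ 0) (hb : b i = m) (c : ℝ) :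
    ∫ v in unitCube (n + 1), frac0 (v j) * frac0 (b ⬝ᵥ v + c) = 0 := by
  have hslice (t : ℝ) (w : Fin n → ℝ) :
      b ⬝ᵥ i.insertNth t w + c = m * t + ((fun l => b (i.succAbove l)) ⬝ᵥ w + c) := by
    simp only [dotProduct, Fin.sum_univ_succAbove _ i, Fin.insertNth_apply_same,
      Fin.insertNth_apply_succAbove, hb]
    ring
  obtain ⟨j, rfl⟩ := Fin.exists_succAbove_eq hij.symm
  rw [integral_unitCube_eq_integral_insertNth i (integrableOn_unitCube_frac0_mul_frac0
    (measurable_pi_apply _) (by fun_prop))]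
  simp only [Fin.insertNth_apply_succAbove, hslice, intervalIntegral.integral_const_mul,
    intervalIntegral_frac0_intCast_mul_add hm, mul_zero, integral_zero]

lemma svec_zero (d : ℕ) : svec d 0 = 0 := by
  simp [svec]

lemma Lmat_pow_apply_zero (d k : ℕ) (l : Fin (d + 1)) :
    (Lmat (d + 1) ^ k) 0 l = if l = 0 then 1 else 0 := by
  induction k generalizing l with
  | zero => simp [Matrix.one_apply, eq_comm]
  | succ k ih => simp [pow_succ', Matrix.mul_apply, ih, Lmat]

lemma svec_apply_zero (n k : ℕ) : svec (n + 1) k 0 = k := by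
  simp [svec, Matrix.mulVec, dotProduct, Matrix.sum_apply, Lmat_pow_apply_zero]

def Lnat (d : ℕ) : Matrix (Fin d) (Fin d) ℕ := Matrix.of fun i j => if j ≤ i then 1 else 0

lemma Lmat_pow_eq_map (d k : ℕ) : Lmat d ^ k = (Lnat d ^ k).map (Nat.castRingHom ℝ) := by
  rw [Matrix.map_pow]
  congr
  ext i j
  simp [Lmat, Lnat, apply_ite]

lemma Lnat_pow_apply_zero_pos {d k : ℕ} (hk : k ≠ 0) (i : Fin (d + 1)) :
    0 < (Lnat (d + 1) ^ k) i 0 := by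
  induction k with
  | zero => exact absurd rfl hk
  | succ k ih =>
    rcases eq_or_ne k 0 with rfl | hk
    · simp [Lnat]
    calc 0 < (Lnat (d + 1) ^ k) i 0 := ih hk
      _ ≤ ∑ p, (Lnat (d + 1) ^ k) i p := Finset.single_le_sum (by simp) (Finset.mem_univ 0)
      _ = (Lnat (d + 1) ^ (k + 1)) i 0 := by simp [pow_succ, Matrix.mul_apply, Lnat]

/-- for `m = n + 1 ≥ 2` and any `x ∈ ℝ`, the integral
`∫_{[0,1)^m} ⟨v_m⟩₀ ⟨v_m + ∑_{j=1}^{m−1} s_j[k] v_j + x s_m[k]⟩₀ dv` equals `1/12` for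
`k = 0` and `0` for every `k ≥ 1`.  Consequently, for the ideal m-th order Σ∆ scheme
with tile function `G_Γ(v) = ⟨v_m⟩₀`, the autocorrelation sequence
`ρ_u[k] = ∫_{[0,1)^m} G_Γ(v) G_Γ(L^k v + x s[k]) dv` equals `(1/12) δ_{k,0}` (so the
power spectral measure is `1/12` times Lebesgue measure on `𝕋`). -/
theorem ideal_scheme_autocorrelation (n : ℕ) (hn : 1 ≤ n) (x : ℝ) (k : ℕ) :
    (∫ v in unitCube (n+1),
        frac0 (v (Fin.last n)) *
          frac0 (v (Fin.last n)
            + (∑ i : Fin n, svec (n+1) k i.castSucc * v i.castSucc)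
            + x * svec (n+1) k (Fin.last n)))
      = (if k = 0 then (1 : ℝ) / 12 else 0) ∧
    (∫ v in unitCube (n+1),
        frac0 (v (Fin.last n)) *
          frac0 ((((Lmat (n+1)) ^ k).mulVec v + x • svec (n+1) k) (Fin.last n)))
      = (if k = 0 then (1 : ℝ) / 12 else 0) := by
  have h0 : (0 : Fin (n + 1)) ≠ Fin.last n := by
    simp only [ne_eq, Fin.ext_iff, Fin.val_zero, Fin.val_last]
    omega
  rcases eq_or_ne k 0 with rfl | hk
  · simp [svec_zero, ← sq, integral_unitCube_frac0_sq]
  rw [if_neg hk]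
  constructor
  · have hlin (v : Fin (n + 1) → ℝ) :
        v (Fin.last n) + ∑ i : Fin n, svec (n + 1) k i.castSucc * v i.castSucc
          = Function.update (svec (n + 1) k) (Fin.last n) 1 ⬝ᵥ v := by
      simp [dotProduct, Fin.sum_univ_castSucc, add_comm]
    simp only [hlin]
    exact integral_unitCube_frac0_mul_frac0_dotProduct h0 (m := k) (Int.natCast_ne_zero.2 hk)
      (by simp [Function.update_of_ne h0, svec_apply_zero]) _
  · exact integral_unitCube_frac0_mul_frac0_dotProduct h0
      (m := (Lnat (n + 1) ^ k) (Fin.last n) 0)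
      (Int.natCast_pos.2 (Lnat_pow_apply_zero_pos hk _)).ne'
      (by simp [Lmat_pow_eq_map]) _
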